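/- arXiv:1506.01083 — 3 statements merged into one kernel-verified Lean document; each statement's English description precedes it below -/
import Mathlib

section
/- For every p with 0 < p < 1 and all positive integers n, d such that d is even and d/2 divides n, there exists a d-dependent random graph distribution G(n,p,d) such that the probability that the sampled graph contains a clique on more than (d·√p)/2 − √(d·√p) vertices is at least 1 − e^{−2n/d}. -/
/-- A `d`-dependent random graph distribution `G(n, p, d)`: a probability space with
Boolean random variables `X e`, one for each unordered pair `e` of distinct vertices of
`Fin n`, each equal to `true` with probability `p`, such that each `X e` is independent of
the joint family of all variables at pairs outside a set `N e` of at most `d` other pairs. -/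
structure DepGraph (n : ℕ) (p : ℝ) (d : ℕ) where
  Ω : Type
  [mΩ : MeasurableSpace Ω]
  μ : MeasureTheory.Measure Ω
  [probμ : MeasureTheory.IsProbabilityMeasure μ]
  X : Sym2 (Fin n) → Ω → Bool
  meas : ∀ e, Measurable (X e)
  edgeProb : ∀ e : Sym2 (Fin n), ¬ e.IsDiag → μ {ω | X e ω = true} = ENNReal.ofReal p
  locDep : ∀ e : Sym2 (Fin n), ¬ e.IsDiag →
    ∃ N : Finset (Sym2 (Fin n)), e ∉ N ∧ N.card ≤ d ∧
      ProbabilityTheory.IndepFun (X e)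
        (fun ω (f : {f : Sym2 (Fin n) // ¬ f.IsDiag ∧ f ∉ N ∧ f ≠ e}) => X f.1 ω) μ

attribute [instance] DepGraph.mΩ DepGraph.probμ

open MeasureTheory ProbabilityTheory

/-- The random simple graph sampled from a `d`-dependent random graph distribution:
`i` and `j` are adjacent iff `i ≠ j` and `X {i,j} = true`. -/
def DepGraph.graph {n : ℕ} {p : ℝ} {d : ℕ} (G : DepGraph n p d) (ω : G.Ω) :
    SimpleGraph (Fin n) where
  Adj i j := i ≠ j ∧ G.X s(i, j) ω = true
  symm := by
    constructor
    intro i j h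
    refine ⟨h.1.symm, ?_⟩
    rw [Sym2.eq_swap]
    exact h.2
  loopless := ⟨fun i h => h.1 rfl⟩

/-- A set `s` of vertices is uncorrelated if the edge variables at any two distinct pairs
of vertices of `s` are independent. -/
def DepGraph.Uncorrelated {n : ℕ} {p : ℝ} {d : ℕ} (G : DepGraph n p d)
    (s : Finset (Fin n)) : Prop :=
  ∀ e e' : Sym2 (Fin n), ¬ e.IsDiag → ¬ e'.IsDiag → e ≠ e' →
    (∀ v ∈ e, v ∈ s) → (∀ v ∈ e', v ∈ s) →
    IndepFun (G.X e) (G.X e') G.μ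

/-!
Split the vertices into `n / k` blocks of size `k = d / 2`. Give every vertex an independent
label, present with probability `√p`, and every pair an independent coin of bias `p`. A pair
inside a block is an edge iff both endpoints are labelled, a pair across blocks iff its coin is
up. Every edge then has probability `p`, and it shares randomness only with the at most `2k = d`
pairs that lie inside a block and meet it. The labelled vertices of a block form a clique
whose size is binomial with mean `k√p`; by Cantelli's inequality it is at most
`k√p - √(2k√p)` with probability at most `1/3 < e⁻¹`. The blocks are independent, so all of them
fail with probability at most `e^(-n/k) = e^(-2n/d)`.
-/

open Finset
open scoped unitInterval

theorem DependsOn.comp_updateFinset_restrict {ι β : Type*} [DecidableEq ι] {α : ι → Type*}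
    {f : (∀ i, α i) → β} {s : Finset ι} (hf : DependsOn f s) (x : ∀ i, α i) :
    (fun y => f (Function.updateFinset x s y)) ∘ s.restrict = f :=
  funext fun _ => hf fun i hi => by simp [Function.updateFinset, mem_coe.mp hi]

section ProductIndependence

variable {ι : Type*} [Fintype ι] {α : ι → Type*} [∀ i, MeasurableSpace (α i)]
  {ν : ∀ i, Measure (α i)} [∀ i, IsProbabilityMeasure (ν i)]

theorem indepFun_pi_of_dependsOn {β γ : Type*} [MeasurableSpace β] [MeasurableSpace γ]
    {f : (∀ i, α i) → β} {g : (∀ i, α i) → γ} {S T : Finset ι} (hST : Disjoint S T)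
    (hf : Measurable f) (hg : Measurable g) (hfS : DependsOn f S) (hgT : DependsOn g T) :
    IndepFun f g (Measure.pi ν) := by
  classical
  obtain ⟨x₀⟩ := nonempty_of_isProbabilityMeasure (Measure.pi ν)
  have hcoord : iIndepFun (fun i (ω : ∀ i, α i) => ω i) (Measure.pi ν) :=
    iIndepFun_pi (X := fun _ => id) fun _ => aemeasurable_id
  rw [← hfS.comp_updateFinset_restrict x₀, ← hgT.comp_updateFinset_restrict x₀]
  exact (hcoord.indepFun_finset S T hST fun i => measurable_pi_apply i).comp
    (hf.comp measurable_updateFinset) (hg.comp measurable_updateFinset)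

theorem measure_biInter_eq_prod_of_dependsOn {κ : Type*} (s : Finset κ)
    {E : κ → Set (∀ i, α i)} {S : κ → Finset ι} (hS : (s : Set κ).PairwiseDisjoint S)
    (hE : ∀ b, MeasurableSet (E b)) (hdep : ∀ b, DependsOn (· ∈ E b) (S b)) :
    Measure.pi ν (⋂ b ∈ s, E b) = ∏ b ∈ s, Measure.pi ν (E b) := by
  classical
  induction s using Finset.induction_on with
  | empty => simp
  | @insert b s hb ih =>
    have hdisj : Disjoint (S b) (s.biUnion S) :=
      (disjoint_biUnion_right _ _ _).mpr fun c hc =>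
        hS (by simp) (by simp [hc]) fun h => hb (h ▸ hc)
    have hindep : IndepFun (· ∈ E b) (· ∈ ⋂ c ∈ s, E c) (Measure.pi ν) := by
      refine indepFun_pi_of_dependsOn hdisj (measurableSet_setOfPred.mp (hE b))
        (measurableSet_setOfPred.mp (.biInter s.countable_toSet fun c _ => hE c)) (hdep b) ?_
      intro x y hxy
      simp only [Set.mem_iInter]
      refine forall_congr fun c => forall_congr fun hc => ?_
      exact hdep c fun i hi => hxy i (mem_biUnion.mpr ⟨c, hc, hi⟩)
    have hpre (A : Set (∀ i, α i)) : (· ∈ A) ⁻¹' {True} = A := by ext; simp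
    rw [set_biInter_insert, prod_insert hb, ← ih (hS.subset (by simp))]
    simpa only [hpre] using hindep.measure_inter_preimage_eq_mul {True} {True}
      (measurableSet_singleton _) (measurableSet_singleton _)

end ProductIndependence

theorem bernoulliMeasure_singleton_true (r : I) :
    Ber(true, false, r) {true} = ENNReal.ofReal r := by
  rw [bernoulliMeasure_apply_of_mem_of_notMem r (measurableSet_singleton _) rfl (by simp),
    ← ENNReal.ofReal_coe_nnreal, unitInterval.coe_toNNReal]

theorem pi_bernoulliMeasure_forall_true {ι : Type*} [Fintype ι] (r : ι → I) (s : Finset ι) :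
    Measure.pi (fun i => Ber(true, false, r i)) {ω | ∀ i ∈ s, ω i = true} =
      ∏ i ∈ s, ENNReal.ofReal (r i) := by
  have : {ω : ι → Bool | ∀ i ∈ s, ω i = true} = (s : Set ι).pi fun _ => {true} := by ext; simp
  rw [this, Measure.pi_pi_finset]
  simp_rw [bernoulliMeasure_singleton_true]

section Cantelli

variable {Ω : Type*} [MeasurableSpace Ω] {μ : Measure Ω} [IsProbabilityMeasure μ]

theorem meas_le_integral_sub_le_variance_div {X : Ω → ℝ} (hX : MemLp X 2 μ) {t : ℝ}
    (ht : 0 < t) :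
    μ {ω | X ω ≤ μ[X] - t} ≤ ENNReal.ofReal (Var[X; μ] / (Var[X; μ] + t ^ 2)) := by
  set σ2 := Var[X; μ]
  have hσ2 : 0 ≤ σ2 := variance_nonneg X μ
  -- Markov's inequality for `(X - μ[X] - u) ^ 2`, at the optimal shift `u = Var[X] / t`
  set u := σ2 / t
  set Y := fun ω => X ω - (μ[X] + u)
  have hY : MemLp Y 2 μ := hX.sub (memLp_const _)
  have hYsq : ∫ ω, Y ω ^ 2 ∂μ = σ2 + u ^ 2 := by
    have hmean : μ[Y] = -u := by
      simp only [Y, integral_sub (hX.integrable one_le_two) (integrable_const _), integral_const,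
        probReal_univ, one_smul]
      ring
    have := variance_eq_sub hY
    rw [variance_sub_const hX.aestronglyMeasurable, hmean] at this
    simp only [Pi.pow_apply] at this
    linarith
  have hsub : {ω | X ω ≤ μ[X] - t} ⊆ {ω | (u + t) ^ 2 ≤ Y ω ^ 2} := by
    intro ω hω
    have : u + t ≤ -Y ω := by simp only [Set.mem_ofPred_eq, Y] at hω ⊢; linarith
    simp only [Set.mem_ofPred_eq]
    nlinarith [div_nonneg hσ2 ht.le]
  have markov := mul_meas_ge_le_integral_of_nonneg (ae_of_all _ fun ω => sq_nonneg (Y ω))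
    hY.integrable_sq ((u + t) ^ 2)
  rw [ENNReal.le_ofReal_iff_toReal_le (measure_ne_top _ _) (by positivity), ← measureReal_def]
  have hut : 0 < (u + t) ^ 2 := by positivity
  calc μ.real {ω | X ω ≤ μ[X] - t}
      ≤ μ.real {ω | (u + t) ^ 2 ≤ Y ω ^ 2} := measureReal_mono hsub
    _ ≤ (σ2 + u ^ 2) / (u + t) ^ 2 := by
      rw [le_div_iff₀ hut, ← hYsq]; linarith [markov]
    _ = σ2 / (σ2 + t ^ 2) := by
      simp only [u]; field_simp; ring

theorem meas_sum_le_sub_sqrt_le_one_third {ι : Type*} {X : ι → Ω → ℝ} {s : Finset ι}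
    (hXm : ∀ i ∈ s, Measurable (X i)) (hX : ∀ i ∈ s, ∀ ω, X i ω ∈ Set.Icc (0 : ℝ) 1)
    (hindep : Set.Pairwise ↑s fun i j => X i ⟂ᵢ[μ] X j) (hpos : 0 < ∑ i ∈ s, μ[X i]) :
    μ {ω | ∑ i ∈ s, X i ω ≤ ∑ i ∈ s, μ[X i] - √(2 * ∑ i ∈ s, μ[X i])} ≤
      ENNReal.ofReal (1 / 3) := by
  set m := ∑ i ∈ s, μ[X i]
  have hL2 : ∀ i ∈ s, MemLp (X i) 2 μ := fun i hi =>
    MemLp.of_bound (hXm i hi).aestronglyMeasurable 1 (ae_of_all _ fun ω => by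
      have := hX i hi ω
      rw [Real.norm_eq_abs, abs_le]; constructor <;> linarith [this.1, this.2])
  have hvar : Var[fun ω => ∑ i ∈ s, X i ω; μ] ≤ m := by
    rw [← sum_fn, IndepFun.variance_sum hL2 hindep]
    refine sum_le_sum fun i hi => ?_
    have hE : 0 ≤ μ[X i] := integral_nonneg fun ω => (hX i hi ω).1
    have := variance_le_sub_mul_sub (μ := μ) (ae_of_all _ (hX i hi)) (hXm i hi).aemeasurable
    nlinarith
  have hmean : ∫ ω, ∑ i ∈ s, X i ω ∂μ = m :=
    integral_finsetSum s fun i hi => (hL2 i hi).integrable one_le_two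
  have ht : 0 < √(2 * m) := Real.sqrt_pos.mpr (by linarith)
  have cantelli := meas_le_integral_sub_le_variance_div (memLp_finsetSum s hL2) ht
  simp only [hmean, Real.sq_sqrt (by linarith : (0 : ℝ) ≤ 2 * m)] at cantelli
  refine cantelli.trans (ENNReal.ofReal_le_ofReal ?_)
  have hσ := variance_nonneg (fun ω => ∑ i ∈ s, X i ω) μ
  rw [div_le_div_iff₀ (by linarith) (by norm_num)]
  linarith

end Cantelli

section BlockModel

/-- The independent coins: a label for each vertex and one coin for each pair. -/
abbrev Coin (n : ℕ) := Fin n ⊕ Sym2 (Fin n)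

variable {n : ℕ} {β : Type*} (blk : Fin n → β)

def SameBlock (e : Sym2 (Fin n)) : Prop := (e.map blk).IsDiag

theorem sameBlock_mk {blk : Fin n → β} {a b : Fin n} :
    SameBlock blk s(a, b) ↔ blk a = blk b := by
  simp [SameBlock]

variable [DecidableEq β]

instance : DecidablePred (SameBlock blk) :=
  fun e => inferInstanceAs (Decidable (e.map blk).IsDiag)

/-- The coins deciding the pair `e`, which is an edge iff all of them are up: the labels of its
two vertices if it lies inside a block, its own coin otherwise. -/
def edgeCoins (e : Sym2 (Fin n)) : Finset (Coin n) :=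
  if SameBlock blk e then (univ.filter (· ∈ e)).map .inl else {.inr e}

def edgeVar (e : Sym2 (Fin n)) (ω : Coin n → Bool) : Bool :=
  decide (∀ i ∈ edgeCoins blk e, ω i = true)

def edgeNbhd (e : Sym2 (Fin n)) : Finset (Sym2 (Fin n)) :=
  univ.filter fun f => f ≠ e ∧ ¬Disjoint (edgeCoins blk f) (edgeCoins blk e)

variable {blk}

theorem inl_mem_edgeCoins {v : Fin n} {e : Sym2 (Fin n)} :
    .inl v ∈ edgeCoins blk e ↔ SameBlock blk e ∧ v ∈ e := by
  unfold edgeCoins; split_ifs with h <;> simp [h]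

theorem inr_mem_edgeCoins {f e : Sym2 (Fin n)} :
    .inr f ∈ edgeCoins blk e ↔ ¬SameBlock blk e ∧ f = e := by
  unfold edgeCoins; split_ifs with h <;> simp [h]

theorem edgeNbhd_subset (a b : Fin n) :
    edgeNbhd blk s(a, b) ⊆ (univ.filter (blk · = blk a)).image (s(a, ·)) ∪
      (univ.filter (blk · = blk b)).image (s(b, ·)) := by
  intro f hf
  obtain ⟨hne, hmeet⟩ := (mem_filter.mp hf).2
  obtain ⟨c, hcf, hce⟩ := not_disjoint_iff.mp hmeet
  cases c with
  | inr g =>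
    exact absurd ((inr_mem_edgeCoins.mp hcf).2.symm.trans (inr_mem_edgeCoins.mp hce).2) hne
  | inl v =>
    obtain ⟨hfblk, hvf⟩ := inl_mem_edgeCoins.mp hcf
    obtain ⟨w, rfl⟩ := Sym2.mem_iff_exists.mp hvf
    have hw : blk w = blk v := (sameBlock_mk.mp hfblk).symm
    rcases Sym2.mem_iff.mp (inl_mem_edgeCoins.mp hce).2 with rfl | rfl
    · exact mem_union_left _ (mem_image.mpr ⟨w, by simp [hw], rfl⟩)
    · exact mem_union_right _ (mem_image.mpr ⟨w, by simp [hw], rfl⟩)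

theorem card_edgeNbhd_le {k : ℕ} (hk : ∀ b, #(univ.filter (blk · = b)) ≤ k)
    (e : Sym2 (Fin n)) : #(edgeNbhd blk e) ≤ 2 * k := by
  induction e using Sym2.ind with
  | _ a b =>
    calc #(edgeNbhd blk s(a, b))
        ≤ #((univ.filter (blk · = blk a)).image (s(a, ·))) +
            #((univ.filter (blk · = blk b)).image (s(b, ·))) :=
          (card_le_card (edgeNbhd_subset a b)).trans (card_union_le _ _)
      _ ≤ k + k := add_le_add (card_image_le.trans (hk _)) (card_image_le.trans (hk _))
      _ = 2 * k := (two_mul k).symm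

variable (q p : I)

def coinRate : Coin n → I := Sum.elim (fun _ => q) (fun _ => p)

noncomputable def coinMeasure : Measure (Coin n → Bool) :=
  Measure.pi fun i => Ber(true, false, coinRate q p i)

instance : IsProbabilityMeasure (coinMeasure (n := n) q p) := by
  unfold coinMeasure; infer_instance

theorem indepFun_edgeVar (e : Sym2 (Fin n)) :
    IndepFun (edgeVar blk e)
      (fun ω (f : {f : Sym2 (Fin n) // ¬f.IsDiag ∧ f ∉ edgeNbhd blk e ∧ f ≠ e}) =>
        edgeVar blk f.1 ω) (coinMeasure q p) := by
  refine indepFun_pi_of_dependsOn disjoint_compl_right .of_discrete .of_discrete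
    (S := edgeCoins blk e) (T := (edgeCoins blk e)ᶜ) ?_ ?_
  · intro ω ω' h
    exact decide_eq_decide.mpr (forall₂_congr fun i hi => by rw [h i hi])
  · intro ω ω' h
    funext f
    obtain ⟨f, -, hfN, hfe⟩ := f
    have hdisj : Disjoint (edgeCoins blk f) (edgeCoins blk e) := by
      by_contra hmeet
      exact hfN (mem_filter.mpr ⟨mem_univ _, hfe, hmeet⟩)
    refine decide_eq_decide.mpr (forall₂_congr fun i hi => ?_)
    rw [h i (by simpa using disjoint_left.mp hdisj hi)]

theorem coinMeasure_edgeVar {e : Sym2 (Fin n)} (he : ¬e.IsDiag) (hqp : (q : ℝ) * q = p) :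
    coinMeasure q p {ω | edgeVar blk e ω = true} = ENNReal.ofReal p := by
  induction e using Sym2.ind with
  | _ a b =>
    have hab : a ≠ b := fun h => he (by simp [h])
    have hset : {ω | edgeVar blk s(a, b) ω = true} =
        {ω | ∀ i ∈ edgeCoins blk s(a, b), ω i = true} := by
      ext; simp [edgeVar]
    rw [hset, coinMeasure, pi_bernoulliMeasure_forall_true, edgeCoins]
    split_ifs
    · have : univ.filter (· ∈ s(a, b)) = {a, b} := by ext; simp
      rw [prod_map, this, prod_pair hab]
      simp [coinRate, ← ENNReal.ofReal_mul q.2.1, hqp]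
    · simp [coinRate]

theorem coinMeasure_label (v : Fin n) :
    coinMeasure q p {ω | ω (.inl v) = true} = ENNReal.ofReal q := by
  have : {ω : Coin n → Bool | ω (.inl v) = true} =
      {ω | ∀ i ∈ ({.inl v} : Finset (Coin n)), ω i = true} := by
    ext; simp
  rw [this, coinMeasure, pi_bernoulliMeasure_forall_true, prod_singleton]
  rfl

theorem coinMeasure_labelCount_le (hq : 0 < (q : ℝ)) {s : Finset (Fin n)} (hs : s.Nonempty) :
    coinMeasure q p {ω | (#(s.filter fun v => ω (.inl v) = true) : ℝ) ≤
      #s * q - √(2 * (#s * q))} ≤ ENNReal.ofReal (1 / 3) := by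
  set X : Fin n → (Coin n → Bool) → ℝ := fun v => {ω | ω (.inl v) = true}.indicator 1
  have hXm : ∀ v, Measurable (X v) := fun v => .of_discrete
  have hXdep : ∀ v, DependsOn (X v) ({.inl v} : Finset (Coin n)) := fun v ω ω' h => by
    simp [X, Set.indicator_apply, h (.inl v) (by simp)]
  have hmean : ∀ v, ∫ ω, X v ω ∂coinMeasure q p = q := fun v => by
    rw [integral_indicator_one .of_discrete, measureReal_def, coinMeasure_label,
      ENNReal.toReal_ofReal q.2.1]
  have hcount : ∀ ω, (#(s.filter fun v => ω (.inl v) = true) : ℝ) = ∑ v ∈ s, X v ω :=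
    fun ω => by simp [X, Set.indicator_apply]
  have htail := meas_sum_le_sub_sqrt_le_one_third (μ := coinMeasure q p) (X := X) (s := s)
    (fun v _ => hXm v)
    (fun v _ ω => by by_cases h : ω (.inl v) = true <;> simp [X, h])
    (fun u _ v _ huv =>
      indepFun_pi_of_dependsOn (by simpa using huv) (hXm u) (hXm v) (hXdep u) (hXdep v))
    (by
      simp only [hmean, sum_const, nsmul_eq_mul]
      exact mul_pos (by exact_mod_cast hs.card_pos) hq)
  simpa only [hmean, sum_const, nsmul_eq_mul, hcount] using htail

variable (blk) {q p}

noncomputable def blockDepGraph (hqp : (q : ℝ) * q = p) {k : ℕ}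
    (hk : ∀ b, #(univ.filter (blk · = b)) ≤ k) : DepGraph n p (2 * k) where
  Ω := Coin n → Bool
  μ := coinMeasure q p
  X := edgeVar blk
  meas _ := .of_discrete
  edgeProb _ he := coinMeasure_edgeVar q p he hqp
  locDep e _ :=
    ⟨edgeNbhd blk e, by simp [edgeNbhd], card_edgeNbhd_le hk e, indepFun_edgeVar q p e⟩

variable {blk}

theorem isClique_labelledBlock (hqp : (q : ℝ) * q = p) {k : ℕ}
    (hk : ∀ b, #(univ.filter (blk · = b)) ≤ k) (ω : Coin n → Bool) (b : β) :
    ((blockDepGraph blk hqp hk).graph ω).IsClique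
      ↑((univ.filter (blk · = b)).filter fun v => ω (.inl v) = true) := by
  intro u hu v hv huv
  simp only [coe_filter, mem_filter, mem_univ, true_and, Set.mem_ofPred_eq] at hu hv
  refine ⟨huv, decide_eq_true fun i hi => ?_⟩
  cases i with
  | inr f =>
    exact absurd (sameBlock_mk.mpr (hu.1.trans hv.1.symm)) (inr_mem_edgeCoins.mp hi).1
  | inl w => rcases Sym2.mem_iff.mp (inl_mem_edgeCoins.mp hi).2 with rfl | rfl <;> tauto

theorem blockDepGraph_exists_large_clique [Fintype β] (hqp : (q : ℝ) * q = p)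
    (hq : 0 < (q : ℝ)) {k : ℕ} (hk0 : 0 < k) (hk : ∀ b, #(univ.filter (blk · = b)) = k) :
    ENNReal.ofReal (1 - Real.exp (-(Fintype.card β))) ≤
      (blockDepGraph blk hqp fun b => (hk b).le).μ {ω | ∃ s : Finset (Fin n),
        ((blockDepGraph blk hqp fun b => (hk b).le).graph ω).IsClique ↑s ∧
          (k : ℝ) * q - √(2 * ((k : ℝ) * q)) < #s} := by
  set F : β → Set (Coin n → Bool) := fun b => {ω |
    (#((univ.filter (blk · = b)).filter fun v => ω (.inl v) = true) : ℝ) ≤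
      (k : ℝ) * q - √(2 * ((k : ℝ) * q))}
  have hF : ∀ b, coinMeasure q p (F b) ≤ ENNReal.ofReal (Real.exp (-1)) := fun b => by
    have hne : (univ.filter (blk · = b)).Nonempty := card_pos.mp (by rw [hk b]; exact hk0)
    refine (hk b ▸ coinMeasure_labelCount_le q p hq hne).trans (ENNReal.ofReal_le_ofReal ?_)
    rw [Real.exp_neg, one_div]
    exact inv_anti₀ (Real.exp_pos 1) (by linarith [Real.exp_one_lt_d9])
  have hInter : coinMeasure q p (⋂ b ∈ univ, F b) = ∏ b, coinMeasure q p (F b) := by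
    refine measure_biInter_eq_prod_of_dependsOn univ
      (S := fun b => (univ.filter (blk · = b)).map .inl) ?_ (fun _ => .of_discrete)
      fun b ω ω' h => ?_
    · intro b _ c _ hbc
      simp only [Function.onFun, disjoint_map]
      exact disjoint_filter.mpr fun v _ hb hc => hbc (hb.symm.trans hc)
    · simp only [F, Set.mem_ofPred_eq]
      congr! 4 with v hv
      rw [h (.inl v) (by simpa using (mem_filter.mp hv).2)]
  have hsub : (⋂ b ∈ univ, F b)ᶜ ⊆ {ω | ∃ s : Finset (Fin n),
        ((blockDepGraph blk hqp fun b => (hk b).le).graph ω).IsClique ↑s ∧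
          (k : ℝ) * q - √(2 * ((k : ℝ) * q)) < #s} := by
    intro ω hω
    simp only [Set.mem_compl_iff, Set.mem_iInter, not_forall, F, Set.mem_ofPred_eq,
      not_le] at hω
    obtain ⟨b, -, hb⟩ := hω
    exact ⟨_, isClique_labelledBlock hqp _ ω b, hb⟩
  calc ENNReal.ofReal (1 - Real.exp (-(Fintype.card β)))
      = 1 - ENNReal.ofReal (Real.exp (-1)) ^ Fintype.card β := by
        rw [ENNReal.ofReal_sub _ (Real.exp_nonneg _), ENNReal.ofReal_one,
          ← ENNReal.ofReal_pow (Real.exp_nonneg _), ← Real.exp_nat_mul, mul_neg_one]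
    _ ≤ 1 - coinMeasure q p (⋂ b ∈ univ, F b) := by
        rw [hInter]
        refine tsub_le_tsub_left ((prod_le_prod' fun b _ => hF b).trans_eq ?_) 1
        rw [prod_const, card_univ]
    _ = coinMeasure q p (⋂ b ∈ univ, F b)ᶜ := (prob_compl_eq_one_sub .of_discrete).symm
    _ ≤ _ := measure_mono hsub

end BlockModel

theorem card_filter_equiv_fst_eq {α β γ : Type*} [Fintype α] [Fintype β] [Fintype γ]
    [DecidableEq β] (E : α ≃ β × γ) (b : β) :
    #(univ.filter fun a => (E a).1 = b) = Fintype.card γ := by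
  have : univ.filter (fun x : β × γ => x.1 = b) = {b} ×ˢ univ := by
    ext ⟨x, y⟩; simp [eq_comm]
  rw [card_equiv E (t := univ.filter fun x : β × γ => x.1 = b) (by simp), this,
    card_product, card_singleton, one_mul, card_univ]

/-- **Lemma (dependent random graphs with cliques of size `Ω(d)`).** For every `p` with
`0 < p < 1` and all positive integers `n, d` with `d` even and `d/2 ∣ n`, there is a
`d`-dependent random graph distribution `G(n,p,d)` such that with probability at least
`1 - e^(-2n/d)` the sampled graph contains a clique on more than
`d·√p/2 - √(d·√p)` vertices. -/
theorem large_clique_construction_one :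
    ∀ p : ℝ, 0 < p → p < 1 →
      ∀ n d : ℕ, 0 < n → 0 < d → 2 ∣ d → d / 2 ∣ n →
        ∃ G : DepGraph n p d,
          ENNReal.ofReal (1 - Real.exp (-(2 * (n : ℝ) / (d : ℝ)))) ≤
            G.μ {ω | ∃ s : Finset (Fin n), (G.graph ω).IsClique ↑s ∧
              (d : ℝ) * Real.sqrt p / 2 - Real.sqrt ((d : ℝ) * Real.sqrt p) <
                (s.card : ℝ)} := by
  intro p hp0 hp1 n d _ hd ⟨k, hdk⟩ hdvd
  subst hdk
  have hk : 0 < k := by omega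
  rw [Nat.mul_div_cancel_left k two_pos] at hdvd
  obtain ⟨m, hm⟩ := hdvd
  let E : Fin n ≃ Fin m × Fin k :=
    (finCongr (hm.trans (mul_comm k m))).trans finProdFinEquiv.symm
  let q : I := ⟨√p, Real.sqrt_nonneg p, Real.sqrt_le_one.mpr hp1.le⟩
  let p' : I := ⟨p, hp0.le, hp1.le⟩
  have hqp : (q : ℝ) * q = p' := Real.mul_self_sqrt hp0.le
  have hfib (b : Fin m) : #(univ.filter fun v => (E v).1 = b) = k := by
    rw [card_filter_equiv_fst_eq, Fintype.card_fin]
  refine ⟨blockDepGraph (fun v => (E v).1) hqp fun b => (hfib b).le, ?_⟩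
  have key := blockDepGraph_exists_large_clique hqp (Real.sqrt_pos.mpr hp0) hk hfib
  have hexp : -(2 * (n : ℝ) / ((2 * k : ℕ) : ℝ)) = -(Fintype.card (Fin m) : ℝ) := by
    rw [Fintype.card_fin, hm]; push_cast; field_simp
  have hθ : ((2 * k : ℕ) : ℝ) * √p / 2 - √(((2 * k : ℕ) : ℝ) * √p) =
      k * √p - √(2 * (k * √p)) := by
    push_cast; ring_nf
  rw [hexp, hθ]
  exact key
end

section
/- There exists n₀ such that the following holds for all n ≥ n₀: for every p with 0 < p < 1 and all positive integers d, k, ℓ, M satisfying k ≤ log(n/(2d·log³ n))/log(1/p), k ≤ log n, 2 ≤ ℓ ≤ k − 1, and M ≤ d·k²/2, one has Σ_{ℓ'=0}^{k−ℓ} C(M, ℓ')·C(n−k−M, k−ℓ−ℓ')·p^{−ℓ·ℓ' − C(ℓ',2)} ≤ 2·C(n−k−M, k−ℓ), where C(a,b) denotes the binomial coefficient (equal to 0 when b > a) and the powers of p are real powers. -/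
open Real Finset

lemma my_choose_descent (N r : ℕ) (h : (r:ℝ) < N) :
    ∀ j, j ≤ r → ((N.choose (r - j) : ℝ)) ≤ (N.choose r : ℝ) * ((r : ℝ)/((N:ℝ) - r))^j := by
  intro j
  induction j with
  | zero => intro _; simp
  | succ j ih =>
    intro hj
    have hj' : j ≤ r := by omega
    have hNr : (0:ℝ) < (N:ℝ) - r := by linarith
    have hrN : r ≤ N := by exact_mod_cast h.le
    set s := r - (j+1) with hs
    have hs1 : s + 1 = r - j := by omega
    have hsN : s ≤ N := by omega
    have hsr : (s:ℝ) ≤ r := by exact_mod_cast (by omega : s ≤ r)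
    have hs1r : ((s:ℝ) + 1) ≤ r := by
      have : s + 1 ≤ r := by omega
      exact_mod_cast this
    have hkeyR : (N.choose (s+1) : ℝ) * ((s:ℝ)+1) = (N.choose s : ℝ) * ((N:ℝ) - s) := by
      have := Nat.choose_succ_right_eq N s
      have h2 : ((N.choose (s+1) * (s+1) : ℕ) : ℝ) = ((N.choose s * (N - s) : ℕ) : ℝ) := by
        rw [this]
      push_cast [Nat.cast_sub hsN] at h2
      linarith
    have h1 : (N.choose s : ℝ) * ((N:ℝ) - r) ≤ (N.choose (s+1) : ℝ) * r := by
      have e1 : (N.choose s:ℝ) * ((N:ℝ) - r) ≤ (N.choose s:ℝ) * ((N:ℝ) - s) :=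
        mul_le_mul_of_nonneg_left (by linarith) (by positivity)
      have e2 : (N.choose (s+1):ℝ) * ((s:ℝ)+1) ≤ (N.choose (s+1):ℝ) * r :=
        mul_le_mul_of_nonneg_left hs1r (by positivity)
      linarith
    have hcs : (N.choose s : ℝ) ≤ (N.choose (s+1) : ℝ) * ((r:ℝ)/((N:ℝ) - r)) := by
      rw [mul_div_assoc', le_div_iff₀ hNr]
      linarith
    have hstep := ih hj'
    calc (N.choose (r - (j+1)) : ℝ) ≤ (N.choose (s+1) : ℝ) * ((r:ℝ)/((N:ℝ) - r)) := hcs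
      _ = (N.choose (r - j) : ℝ) * ((r:ℝ)/((N:ℝ) - r)) := by rw [hs1]
      _ ≤ ((N.choose r : ℝ) * ((r : ℝ)/((N:ℝ) - r))^j) * ((r:ℝ)/((N:ℝ) - r)) :=
          mul_le_mul_of_nonneg_right hstep (by positivity)
      _ = (N.choose r : ℝ) * ((r : ℝ)/((N:ℝ) - r))^(j+1) := by ring

lemma my_half_geom (m : ℕ) : ∑ i ∈ Finset.range m, ((1:ℝ)/2)^i ≤ 2 := by
  have h : ∑ i ∈ Finset.range m, ((1:ℝ)/2)^i = 2 - 2*(1/2)^m := by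
    rw [geom_sum_eq (by norm_num : ((1:ℝ)/2) ≠ 1)]
    ring_nf
  rw [h]
  have : (0:ℝ) ≤ (1/2:ℝ)^m := by positivity
  linarith

lemma my_sum_bound (M N r k ℓ : ℕ) (p X : ℝ) (hp : 0 < p) (hp1 : p < 1)
    (hrk : r ≤ k) (hkN : (k:ℝ) < (N:ℝ))
    (hℓrk : ℓ + r = k)
    (hpk : p ^ (-(k:ℝ)) ≤ X) (hX0 : 0 ≤ X)
    (hq : (M:ℝ) * ((k:ℝ)/((N:ℝ)-(k:ℝ))) * X ≤ 1/2) :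
    ∑ ℓ' ∈ Finset.range (r+1), (M.choose ℓ' : ℝ) * ((N.choose (r - ℓ') : ℕ) : ℝ) *
        p ^ (-((ℓ : ℝ) * (ℓ' : ℝ) + (ℓ'.choose 2 : ℝ))) ≤ 2 * (N.choose r : ℝ) := by
  have hk' : (0:ℝ) ≤ (k:ℝ) := Nat.cast_nonneg k
  have hNkpos : (0:ℝ) < (N:ℝ) - (k:ℝ) := by linarith
  have hrk' : (r:ℝ) ≤ (k:ℝ) := by exact_mod_cast hrk
  have hrN : (r:ℝ) < (N:ℝ) := lt_of_le_of_lt hrk' hkN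
  have hNrpos : (0:ℝ) < (N:ℝ) - (r:ℝ) := by linarith
  have hq0 : (0:ℝ) ≤ (M:ℝ) * ((k:ℝ)/((N:ℝ)-(k:ℝ))) * X :=
    mul_nonneg (mul_nonneg (Nat.cast_nonneg M) (div_nonneg hk' hNkpos.le)) hX0
  have hterm : ∀ ℓ' ∈ Finset.range (r + 1),
      (M.choose ℓ' : ℝ) * ((N.choose (r - ℓ') : ℕ) : ℝ) *
        p ^ (-((ℓ : ℝ) * (ℓ' : ℝ) + (ℓ'.choose 2 : ℝ))) ≤
      (N.choose r : ℝ) * (1/2) ^ ℓ' := by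
    intro ℓ' hmem
    have hle : ℓ' ≤ r := by
      simp only [Finset.mem_range] at hmem; omega
    have hexpN : ℓ * ℓ' + ℓ'.choose 2 ≤ k * ℓ' := by
      have c1 : ℓ'.choose 2 ≤ ℓ' * ℓ' := by
        calc ℓ'.choose 2 ≤ ℓ' ^ 2 := Nat.choose_le_pow ℓ' 2
          _ = ℓ' * ℓ' := by ring
      have c2 : ℓ' * ℓ' ≤ r * ℓ' := Nat.mul_le_mul_right ℓ' hle
      calc ℓ * ℓ' + ℓ'.choose 2 ≤ ℓ * ℓ' + r * ℓ' := by omega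
        _ = (ℓ + r) * ℓ' := by ring
        _ = k * ℓ' := by rw [hℓrk]
    have hprpow : p ^ (-((ℓ : ℝ) * (ℓ' : ℝ) + (ℓ'.choose 2 : ℝ))) ≤ X ^ ℓ' := by
      have e1 : p ^ (-((ℓ : ℝ) * (ℓ' : ℝ) + (ℓ'.choose 2 : ℝ))) ≤ p ^ (-((k:ℝ) * (ℓ':ℝ))) := by
        apply Real.rpow_le_rpow_of_exponent_ge hp hp1.le
        have : (ℓ : ℝ) * (ℓ' : ℝ) + (ℓ'.choose 2 : ℝ) ≤ (k:ℝ) * (ℓ':ℝ) := by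
          exact_mod_cast hexpN
        linarith
      have e2 : p ^ (-((k:ℝ) * (ℓ':ℝ))) = (p ^ (-(k:ℝ))) ^ ℓ' := by
        rw [show -((k:ℝ) * (ℓ':ℝ)) = (-(k:ℝ)) * (ℓ':ℝ) by ring,
          Real.rpow_mul hp.le, Real.rpow_natCast]
      have e3 : (p ^ (-(k:ℝ))) ^ ℓ' ≤ X ^ ℓ' := by
        apply pow_le_pow_left₀ (by positivity) hpk
      rw [e2] at e1
      exact e1.trans e3
    have hchooseM : (M.choose ℓ' : ℝ) ≤ (M:ℝ) ^ ℓ' := by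
      exact_mod_cast Nat.choose_le_pow M ℓ'
    have hchooseN : ((N.choose (r - ℓ') : ℕ) : ℝ) ≤
        (N.choose r : ℝ) * ((k:ℝ)/((N:ℝ)-(k:ℝ))) ^ ℓ' := by
      have b1 := my_choose_descent N r hrN ℓ' hle
      have b2 : ((r:ℝ)/((N:ℝ) - (r:ℝ))) ^ ℓ' ≤ ((k:ℝ)/((N:ℝ)-(k:ℝ))) ^ ℓ' := by
        apply pow_le_pow_left₀ (div_nonneg (Nat.cast_nonneg r) hNrpos.le)
        rw [div_le_div_iff₀ hNrpos hNkpos]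
        nlinarith
      calc ((N.choose (r - ℓ') : ℕ) : ℝ)
          ≤ (N.choose r : ℝ) * ((r:ℝ)/((N:ℝ) - (r:ℝ))) ^ ℓ' := b1
        _ ≤ (N.choose r : ℝ) * ((k:ℝ)/((N:ℝ)-(k:ℝ))) ^ ℓ' :=
            mul_le_mul_of_nonneg_left b2 (Nat.cast_nonneg _)
    calc (M.choose ℓ' : ℝ) * ((N.choose (r - ℓ') : ℕ) : ℝ) *
          p ^ (-((ℓ : ℝ) * (ℓ' : ℝ) + (ℓ'.choose 2 : ℝ)))
        ≤ ((M:ℝ) ^ ℓ') * ((N.choose r : ℝ) * ((k:ℝ)/((N:ℝ)-(k:ℝ))) ^ ℓ') * (X ^ ℓ') := by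
          apply mul_le_mul _ hprpow (Real.rpow_nonneg hp.le _) (by positivity)
          apply mul_le_mul hchooseM hchooseN (Nat.cast_nonneg _)
          positivity
      _ = (N.choose r : ℝ) * ((M:ℝ) * ((k:ℝ)/((N:ℝ)-(k:ℝ))) * X) ^ ℓ' := by
          rw [mul_pow, mul_pow]; ring
      _ ≤ (N.choose r : ℝ) * (1/2) ^ ℓ' := by
          apply mul_le_mul_of_nonneg_left _ (Nat.cast_nonneg _)
          exact pow_le_pow_left₀ hq0 hq ℓ'
  calc ∑ ℓ' ∈ Finset.range (r + 1),
        (M.choose ℓ' : ℝ) * ((N.choose (r - ℓ') : ℕ) : ℝ) *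
          p ^ (-((ℓ : ℝ) * (ℓ' : ℝ) + (ℓ'.choose 2 : ℝ)))
      ≤ ∑ ℓ' ∈ Finset.range (r + 1), (N.choose r : ℝ) * (1/2) ^ ℓ' :=
        Finset.sum_le_sum hterm
    _ = (N.choose r : ℝ) * ∑ ℓ' ∈ Finset.range (r + 1), ((1:ℝ)/2) ^ ℓ' := by
        rw [Finset.mul_sum]
    _ ≤ (N.choose r : ℝ) * 2 :=
        mul_le_mul_of_nonneg_left (my_half_geom (r+1)) (Nat.cast_nonneg _)
    _ = 2 * (N.choose r : ℝ) := by ring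

set_option maxHeartbeats 2000000 in
/-- **Claim (telescoping binomial estimate).** There is `n₀` such that for all `n ≥ n₀`,
every `p` with `0 < p < 1`, and all positive integers `d, k, ℓ, M` with
`k ≤ log(n/(2d log³ n))/log(1/p)`, `k ≤ log n`, `2 ≤ ℓ ≤ k-1`, and `M ≤ d·k²/2`, one has
`Σ_{ℓ'=0}^{k-ℓ} C(M,ℓ')·C(n-k-M, k-ℓ-ℓ')·p^(-ℓℓ'-C(ℓ',2)) ≤ 2·C(n-k-M, k-ℓ)`,
where the binomial coefficient `C(a,b)` vanishes for `b > a` and powers of `p` are real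
powers. -/
theorem telescoping_binomial_estimate :
    ∃ n₀ : ℕ, ∀ n : ℕ, n₀ ≤ n →
      ∀ p : ℝ, 0 < p → p < 1 →
      ∀ d k ℓ M : ℕ, 0 < d → 0 < k → 0 < ℓ → 0 < M →
        (k : ℝ) ≤ Real.log ((n : ℝ) / (2 * d * Real.log n ^ 3)) / Real.log (1 / p) →
        (k : ℝ) ≤ Real.log n →
        2 ≤ ℓ → ℓ ≤ k - 1 →
        (M : ℝ) ≤ (d : ℝ) * (k : ℝ) ^ 2 / 2 →
        ∑ ℓ' ∈ Finset.range (k - ℓ + 1),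
            (M.choose ℓ' : ℝ) * ((n - k - M).choose (k - ℓ - ℓ') : ℝ) *
              p ^ (-((ℓ : ℝ) * (ℓ' : ℝ) + (ℓ'.choose 2 : ℝ))) ≤
          2 * ((n - k - M).choose (k - ℓ) : ℝ) := by
  refine ⟨⌈Real.exp 100⌉₊, fun n hn p hp hp1 d k ℓ M hd hk hℓ hMpos h1 h2 hℓ2 hℓk hM2 => ?_⟩
  have hexp : Real.exp 100 ≤ (n:ℝ) := (Nat.le_ceil _).trans (Nat.cast_le.mpr hn)
  have hn0 : (0:ℝ) < (n:ℝ) := lt_of_lt_of_le (Real.exp_pos 100) hexp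
  have hL : (100:ℝ) ≤ Real.log (n:ℝ) := by
    have := Real.log_le_log (Real.exp_pos 100) hexp
    rwa [Real.log_exp] at this
  have hLpos : (0:ℝ) < Real.log (n:ℝ) := by linarith
  have hn4 : (10000:ℝ) ≤ (n:ℝ) := by
    have e1 : (26:ℝ) ≤ Real.exp 25 := by
      have := Real.add_one_le_exp (25:ℝ); linarith
    have e2 : ((26:ℝ))^4 ≤ (Real.exp 25)^4 := pow_le_pow_left₀ (by norm_num) e1 4
    have e3 : (Real.exp 25)^4 = Real.exp 100 := by
      rw [← Real.exp_nat_mul]; norm_num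
    nlinarith
  have hsqrt : (100:ℝ) ≤ Real.sqrt (n:ℝ) := by
    have h' : Real.sqrt 10000 ≤ Real.sqrt (n:ℝ) := Real.sqrt_le_sqrt hn4
    rwa [show (10000:ℝ) = 100^2 by norm_num,
      Real.sqrt_sq (by norm_num : (0:ℝ) ≤ 100)] at h'
  have hLle : Real.log (n:ℝ) ≤ (n:ℝ) / 50 := by
    have h2s : Real.log (n:ℝ) = 2 * Real.log (Real.sqrt (n:ℝ)) := by
      rw [Real.log_sqrt hn0.le]; ring
    have hlog : Real.log (Real.sqrt (n:ℝ)) ≤ Real.sqrt (n:ℝ) - 1 :=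
      Real.log_le_sub_one_of_pos (Real.sqrt_pos.mpr hn0)
    have hs2 : Real.sqrt (n:ℝ) * Real.sqrt (n:ℝ) = (n:ℝ) := Real.mul_self_sqrt hn0.le
    nlinarith
  have hd' : (0:ℝ) < (d:ℝ) := by exact_mod_cast hd
  have hk' : (0:ℝ) < (k:ℝ) := by exact_mod_cast hk
  have hplog : 0 < Real.log (1/p) := Real.log_pos (one_lt_one_div hp hp1)
  have hXpos : 0 < (n:ℝ) / (2 * d * Real.log (n:ℝ) ^ 3) := by positivity
  have h1' : (k:ℝ) * Real.log (1/p) ≤ Real.log ((n:ℝ) / (2 * d * Real.log (n:ℝ) ^ 3)) :=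
    (le_div_iff₀ hplog).mp h1
  have hlogX : 0 < Real.log ((n:ℝ) / (2 * d * Real.log (n:ℝ) ^ 3)) := by
    have : Real.log (1/p) ≤ (k:ℝ) * Real.log (1/p) :=
      le_mul_of_one_le_left hplog.le (by exact_mod_cast hk)
    linarith
  have hX1 : 1 < (n:ℝ) / (2 * d * Real.log (n:ℝ) ^ 3) := by
    by_contra hcon
    have := Real.log_nonpos hXpos.le (le_of_not_gt hcon)
    linarith
  have hpk : p ^ (-(k:ℝ)) ≤ (n:ℝ) / (2 * d * Real.log (n:ℝ) ^ 3) := by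
    have heq : p ^ (-(k:ℝ)) = Real.exp ((k:ℝ) * Real.log (1/p)) := by
      rw [Real.rpow_def_of_pos hp]
      congr 1
      rw [one_div, Real.log_inv]; ring
    rw [heq, ← Real.exp_log hXpos]
    exact Real.exp_le_exp.mpr h1'
  have hden : (0:ℝ) < 2 * d * Real.log (n:ℝ) ^ 3 := by positivity
  have hdn : 2 * (d:ℝ) * Real.log (n:ℝ) ^ 3 < (n:ℝ) := by
    have := (one_lt_div hden).mp hX1
    linarith
  have hkL : (k:ℝ) ≤ Real.log (n:ℝ) := h2
  have hMb : (M:ℝ) ≤ (d:ℝ) * Real.log (n:ℝ) ^ 2 / 2 := by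
    have hk2 : (k:ℝ)^2 ≤ Real.log (n:ℝ)^2 := by nlinarith
    have := mul_le_mul_of_nonneg_left hk2 hd'.le
    linarith
  have hMn : (M:ℝ) ≤ (n:ℝ) / 400 := by
    have e1 : (d:ℝ) * Real.log (n:ℝ) ^ 2 / 2 ≤ (n:ℝ) / (4 * Real.log (n:ℝ)) := by
      rw [div_le_div_iff₀ (by norm_num) (by positivity)]
      have : (d:ℝ) * Real.log (n:ℝ) ^ 2 * (4 * Real.log (n:ℝ)) =
          2 * (2 * (d:ℝ) * Real.log (n:ℝ) ^ 3) := by ring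
      rw [this]
      linarith
    have e2 : (n:ℝ) / (4 * Real.log (n:ℝ)) ≤ (n:ℝ) / 400 := by
      rw [div_le_div_iff₀ (by positivity) (by norm_num)]
      have : (n:ℝ) * 100 ≤ (n:ℝ) * Real.log (n:ℝ) :=
        mul_le_mul_of_nonneg_left hL hn0.le
      linarith
    linarith
  have hkn : (k:ℝ) ≤ (n:ℝ) / 50 := hkL.trans hLle
  have hKM : k + M ≤ n := by
    have : ((k + M : ℕ) : ℝ) ≤ (n:ℝ) := by push_cast; linarith
    exact_mod_cast this
  have hNcast : (((n - k - M : ℕ)) : ℝ) = (n:ℝ) - k - M := by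
    have heq : n - k - M = n - (k + M) := by omega
    rw [heq, Nat.cast_sub hKM]
    push_cast; ring
  have hNk : (n:ℝ) / 2 ≤ (((n - k - M : ℕ)) : ℝ) - (k:ℝ) := by
    rw [hNcast]; linarith
  have hkN : (k:ℝ) < (((n - k - M : ℕ)) : ℝ) := by linarith
  have hq : (M:ℝ) * ((k:ℝ)/((((n - k - M : ℕ)) : ℝ)-(k:ℝ))) *
      ((n:ℝ) / (2 * d * Real.log (n:ℝ) ^ 3)) ≤ 1/2 := by
    have hNkpos : (0:ℝ) < (((n - k - M : ℕ)) : ℝ) - (k:ℝ) := by linarith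
    have e1 : (k:ℝ)/((((n - k - M : ℕ)) : ℝ)-(k:ℝ)) ≤ 2 * Real.log (n:ℝ) / (n:ℝ) := by
      rw [div_le_div_iff₀ hNkpos hn0]
      have f1 : (k:ℝ) * (n:ℝ) ≤ Real.log (n:ℝ) * (n:ℝ) :=
        mul_le_mul_of_nonneg_right hkL hn0.le
      have f2 : Real.log (n:ℝ) * ((n:ℝ)/2) ≤
          Real.log (n:ℝ) * ((((n - k - M : ℕ)) : ℝ) - (k:ℝ)) :=
        mul_le_mul_of_nonneg_left hNk hLpos.le
      linarith
    have e2 : (M:ℝ) * ((k:ℝ)/((((n - k - M : ℕ)) : ℝ)-(k:ℝ))) *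
        ((n:ℝ) / (2 * d * Real.log (n:ℝ) ^ 3)) ≤
        ((d:ℝ) * Real.log (n:ℝ) ^ 2 / 2) * (2 * Real.log (n:ℝ) / (n:ℝ)) *
        ((n:ℝ) / (2 * d * Real.log (n:ℝ) ^ 3)) := by
      apply mul_le_mul_of_nonneg_right _ hXpos.le
      apply mul_le_mul hMb e1 (div_nonneg (Nat.cast_nonneg k) hNkpos.le) (by positivity)
    have e3 : ((d:ℝ) * Real.log (n:ℝ) ^ 2 / 2) * (2 * Real.log (n:ℝ) / (n:ℝ)) *
        ((n:ℝ) / (2 * d * Real.log (n:ℝ) ^ 3)) = 1/2 := by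
      rw [div_mul_div_comm, div_mul_div_comm,
        div_eq_div_iff (ne_of_gt (by positivity)) (by norm_num : (2:ℝ) ≠ 0)]
      ring
    linarith
  exact my_sum_bound M (n - k - M) (k - ℓ) k ℓ p
    ((n:ℝ) / (2 * d * Real.log (n:ℝ) ^ 3)) hp hp1 (by omega) hkN (by omega) hpk hXpos.le hq
end

section
/- Let H be a random bipartite graph with parts A = {1,…,n} and B = {1,…,n} in which each of the n² possible edges is included independently with probability p ∈ (0,1), and let f : {1,…,n} → {1,…,n} be a d-limited function. For each unordered pair {i,j} of distinct vertices let Y_{ij} be the indicator that {i,j} is an edge of G_{f,H}. Then Pr[Y_{ij} = 1] = p² for every pair, and the family (Y_{ij}) is (2d−2)-locally dependent: for each pair {i,j} there is a set of at most 2d−2 other pairs (namely the pairs {i,u} with f(u) = f(j), u ≠ j, and the pairs {j,u} with f(u) = f(i), u ≠ i) such that Y_{ij} is independent of the joint family of the indicators of all remaining pairs. In particular, G_{f,H} is a (2d−2)-dependent random graph with edge probability p². -/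
/-- A function `f : [n] → [n]` is `d`-limited if every point has at most `d` preimages. -/
def DLimited (n d : ℕ) (f : Fin n → Fin n) : Prop :=
  ∀ j : Fin n, (Finset.univ.filter fun i => f i = j).card ≤ d

/-- For a bipartite graph `H` with parts `[n]` and `[n]`, a function `f` and a pair
`{i, j}`, the prescribed dependency set: the pairs `{i,u}` with `f u = f j`, `u ≠ j`,
together with the pairs `{j,u}` with `f u = f i`, `u ≠ i`. -/
def depSet (n : ℕ) (f : Fin n → Fin n) (i j : Fin n) : Finset (Sym2 (Fin n)) :=
  ((Finset.univ.filter fun u : Fin n => f u = f j ∧ u ≠ j).image fun u => s(i, u)) ∪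
    ((Finset.univ.filter fun u : Fin n => f u = f i ∧ u ≠ i).image fun u => s(j, u))

/-!
`Y {i,j}` is a function of the two coordinates `(i, f j)` and `(j, f i)` of `H`. These two
coordinates are distinct, which gives the probability `p²`. A pair `{u,v}` can use one of them
only if `u = i, f v = f j` or `u = j, f v = f i`, i.e. only if `{u,v} = {i,j}` or `{u,v}` lies in
the dependency set; so all other indicators are functions of the remaining coordinates, and
independence follows by grouping the independent coordinates of `H` into two disjoint blocks.
-/

open MeasureTheory ProbabilityTheory

section Independence

variable {Ω ι β γ δ : Type*} {mΩ : MeasurableSpace Ω} {μ : Measure Ω} [mβ : MeasurableSpace β]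
  [MeasurableSpace γ] [MeasurableSpace δ]

theorem ProbabilityTheory.iIndepFun.indepFun_of_measurable_iSup {E : ι → Ω → β}
    (hE : iIndepFun E μ) (hmeas : ∀ i, Measurable (E i)) {S T : Set ι} (hST : Disjoint S T)
    {X : Ω → γ} {Z : Ω → δ} (hX : Measurable[⨆ i ∈ S, mβ.comap (E i)] X)
    (hZ : Measurable[⨆ i ∈ T, mβ.comap (E i)] Z) : IndepFun X Z μ := by
  have hblocks := indep_iSup_of_disjoint (fun i => (hmeas i).comap_le)
    ((iIndepFun_iff_iIndep _ _ _).1 hE) hST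
  rw [IndepFun_iff_Indep]
  exact indep_of_indep_of_le_right (indep_of_indep_of_le_left hblocks hX.comap_le)
    hZ.comap_le

theorem measurable_iSup_comap_and {E : ι → Ω → Bool} {S : Set ι} {a b : ι} (ha : a ∈ S)
    (hb : b ∈ S) :
    Measurable[⨆ i ∈ S, MeasurableSpace.comap (E i) inferInstance] fun ω => E a ω && E b ω := by
  have hE : ∀ e ∈ S, Measurable[⨆ i ∈ S, MeasurableSpace.comap (E i) inferInstance] (E e) :=
    fun e he => (comap_measurable (E e)).mono
      (le_iSup₂ (f := fun i _ => MeasurableSpace.comap (E i) inferInstance) e he) le_rfl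
  exact (measurable_of_countable fun x : Bool × Bool => x.1 && x.2).comp
    ((hE a ha).prodMk (hE b hb))

theorem ProbabilityTheory.iIndepFun.measure_and_eq_mul {E : ι → Ω → Bool} (hE : iIndepFun E μ)
    {a b : ι} (hab : a ≠ b) :
    μ {ω | (E a ω && E b ω) = true} = μ {ω | E a ω = true} * μ {ω | E b ω = true} := by
  have hset : {ω | (E a ω && E b ω) = true} = E a ⁻¹' {true} ∩ E b ⁻¹' {true} := by
    ext ω
    simp
  rw [hset, (hE.indepFun hab).measure_inter_preimage_eq_mul _ _ trivial trivial]
  rfl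

end Independence

section Combinatorics

open Finset

variable {n d : ℕ} {f : Fin n → Fin n}

theorem DLimited.card_filter_eq_ne_le (hf : DLimited n d f) (k : Fin n) :
    #{u | f u = f k ∧ u ≠ k} ≤ d - 1 := by
  have hfiber :
      ({u | f u = f k ∧ u ≠ k} : Finset (Fin n)) = ({u | f u = f k} : Finset (Fin n)).erase k := by
    ext u
    simp [and_comm]
  rw [hfiber, card_erase_of_mem (by simp)]
  exact Nat.sub_le_sub_right (hf (f k)) 1

theorem DLimited.card_depSet_le (hf : DLimited n d f) (i j : Fin n) :
    #(depSet n f i j) ≤ 2 * d - 2 := by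
  have hi := hf.card_filter_eq_ne_le i
  have hj := hf.card_filter_eq_ne_le j
  calc #(depSet n f i j)
      ≤ #{u | f u = f j ∧ u ≠ j} + #{u | f u = f i ∧ u ≠ i} :=
        (card_union_le _ _).trans (add_le_add card_image_le card_image_le)
    _ ≤ 2 * d - 2 := by omega

theorem notMem_pair_of_notMem_depSet {i j a b : Fin n} (hdep : s(a, b) ∉ depSet n f i j)
    (hne : s(a, b) ≠ s(i, j)) : (a, f b) ∉ ({(i, f j), (j, f i)} : Set (Fin n × Fin n)) := by
  simp only [Set.mem_insert_iff, Set.mem_singleton_iff, Prod.mk.injEq]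
  rintro (⟨rfl, hb⟩ | ⟨rfl, hb⟩)
  · have hbj : b ≠ j := by rintro rfl; exact hne rfl
    exact hdep (mem_union_left _ (mem_image_of_mem _ (by simp [hb, hbj])))
  · have hbi : b ≠ i := by rintro rfl; exact hne Sym2.eq_swap
    exact hdep (mem_union_right _ (mem_image_of_mem _ (by simp [hb, hbi])))

end Combinatorics

theorem GfH_is_dependent_random_graph_general
    {n d : ℕ} {p : ℝ} (hp : 0 < p)
    {Ω : Type} [MeasurableSpace Ω] (μ : Measure Ω) [IsProbabilityMeasure μ]
    (E : Fin n × Fin n → Ω → Bool) (hmeas : ∀ e, Measurable (E e))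
    (hindep : iIndepFun E μ)
    (hprob : ∀ e, μ {ω | E e ω = true} = ENNReal.ofReal p)
    (f : Fin n → Fin n) (hf : DLimited n d f)
    (Y : Sym2 (Fin n) → Ω → Bool)
    (hY : ∀ i j : Fin n, Y s(i, j) = fun ω => E (i, f j) ω && E (j, f i) ω) :
    ∀ i j : Fin n, i ≠ j →
      μ {ω | Y s(i, j) ω = true} = ENNReal.ofReal (p ^ 2) ∧
      (depSet n f i j).card ≤ 2 * d - 2 ∧
      IndepFun (Y s(i, j))
        (fun ω (g : {g : Sym2 (Fin n) // ¬ g.IsDiag ∧ g ∉ depSet n f i j ∧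
            g ≠ s(i, j)}) => Y g.1 ω) μ := by
  intro i j hij
  refine ⟨?_, hf.card_depSet_le i j, ?_⟩
  · have hcoord : (i, f j) ≠ (j, f i) := fun h => hij (congrArg Prod.fst h)
    rw [hY, hindep.measure_and_eq_mul hcoord, hprob, hprob, sq, ENNReal.ofReal_mul hp.le]
  set S : Set (Fin n × Fin n) := {(i, f j), (j, f i)}
  refine hindep.indepFun_of_measurable_iSup hmeas (disjoint_compl_right (a := S)) ?_ ?_
  · rw [hY]
    exact measurable_iSup_comap_and (by simp [S]) (by simp [S])
  -- the σ-algebra on `Ω` here is the block one, so it must be unified, not synthesized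
  refine (@measurable_pi_iff _ _ _ (_) _ _).mpr fun ⟨g, _, hdep, hne⟩ => ?_
  induction g using Sym2.ind with
  | _ u v =>
    rw [hY]
    refine measurable_iSup_comap_and (notMem_pair_of_notMem_depSet hdep hne) ?_
    rw [Sym2.eq_swap] at hdep hne
    exact notMem_pair_of_notMem_depSet hdep hne

open MeasureTheory ProbabilityTheory in
/-- **Lemma (`G_{f,H}` is a `(2d-2)`-dependent random graph with edge probability `p²`).**
Let `H` be a random bipartite graph with parts `[n]` and `[n]` in which each of the `n²`
possible edges `E e` is included independently with probability `p ∈ (0,1)`, let `f` be a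
`d`-limited function, and let `Y {i,j}` be the indicator that `{i,j}` is an edge of
`G_{f,H}`, i.e. `Y s(i,j) = E (i, f j) && E (j, f i)`.  Then every `Y s(i,j)` (`i ≠ j`)
equals `true` with probability `p²`, the dependency set of `{i,j}` has at most `2d-2`
elements, and `Y s(i,j)` is independent of the joint family of the indicators at all pairs
of distinct vertices outside the dependency set. -/
theorem GfH_is_dependent_random_graph
    {n d : ℕ} (hd : 0 < d) {p : ℝ} (hp : 0 < p) (hp1 : p < 1)
    {Ω : Type} [MeasurableSpace Ω] (μ : Measure Ω) [IsProbabilityMeasure μ]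
    (E : Fin n × Fin n → Ω → Bool) (hmeas : ∀ e, Measurable (E e))
    (hindep : iIndepFun E μ)
    (hprob : ∀ e, μ {ω | E e ω = true} = ENNReal.ofReal p)
    (f : Fin n → Fin n) (hf : DLimited n d f)
    (Y : Sym2 (Fin n) → Ω → Bool)
    (hY : ∀ i j : Fin n, Y s(i, j) = fun ω => E (i, f j) ω && E (j, f i) ω) :
    ∀ i j : Fin n, i ≠ j →
      μ {ω | Y s(i, j) ω = true} = ENNReal.ofReal (p ^ 2) ∧
      (depSet n f i j).card ≤ 2 * d - 2 ∧
      IndepFun (Y s(i, j))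
        (fun ω (g : {g : Sym2 (Fin n) // ¬ g.IsDiag ∧ g ∉ depSet n f i j ∧
            g ≠ s(i, j)}) => Y g.1 ω) μ :=
  GfH_is_dependent_random_graph_general hp μ E hmeas hindep hprob f hf Y hY
end
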